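/- For fixed γ1 ∈ [0, π/2] and fixed x3 ∈ (−1, 0), the function γ2 ↦ g(x3, γ1, γ2) (given by the piecewise formula of Eq. (gm1)) is monotonically non-increasing on [0, min(γ1, π/2 − γ1)]; for fixed x3 ∈ (0, 1) it is monotonically non-decreasing in γ2 on the same interval. -/

import Mathlib

/-!
For `x3 < 0` the third branch of `g` never applies on the window `|γ2| ≤ min γ1 (π/2 - γ1)`, and
which of the first two branches applies is decided by the sign of `x33 - x3`, a continuous function
of `γ2`. The first branch is a decreasing cosine. The middle one equals
`(1 - x3²) sin γ1 / 4 * (cos γ2 / (u - x3) + cos γ2 / (u + x3))` with `u` linear in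
`(cos γ2, sin γ2)`, and each summand decreases because `|cos a - cos b| ≤ cos γ1 * sin (b - a)`.
On the boundary `x3 = x33` the two formulas agree, so by the intermediate value theorem `g` is
antitone on the whole window. The case `x3 > 0` follows from `g(γ1, -γ2, -x3) = g(γ1, γ2, x3)`,
which exchanges the outer branches.
-/

open Real

/-- Boundary point x3^(3) of Eq. (interval2). -/
noncomputable def x33 (γ1 γ2 : ℝ) : ℝ :=
  (-Real.sin γ1 * (Real.sin γ1 +
      (Real.cos γ1 * Real.cos γ2 + (Real.sin γ1)^2) * Real.sin γ2)) /
    (1 + Real.cos γ1 * (Real.cos γ2 -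
      Real.sin γ2 * (Real.cos γ1 * Real.sin γ2 + (Real.sin γ1)^2 * Real.tan γ2)))

/-- Boundary point x3^(4) of Eq. (interval2). -/
noncomputable def x34 (γ1 γ2 : ℝ) : ℝ :=
  (-Real.sin γ1 * (-Real.sin γ1 +
      (Real.cos γ1 * Real.cos γ2 + (Real.sin γ1)^2) * Real.sin γ2)) /
    (1 + Real.cos γ1 * (Real.cos γ2 -
      Real.sin γ2 * (Real.cos γ1 * Real.sin γ2 + (Real.sin γ1)^2 * Real.tan γ2)))

/-- The piecewise geometric-measure function `g(x3, γ1, γ2)` of Eq. (gm1). -/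
noncomputable def gGM (γ1 γ2 x3 : ℝ) : ℝ :=
  if x3 ≤ x33 γ1 γ2 then (1 - x3) * (1 + Real.cos (γ1 + γ2)) / 4
  else if x3 < x34 γ1 γ2 then
    (1 - x3^2) * Real.sin γ1 * Real.cos γ2 *
        (Real.cos γ2 * Real.sin γ1 - x3 * Real.cos γ1 * Real.sin γ2) /
      (-2 * (x3^2 - (Real.cos γ2 * Real.sin γ1 - x3 * Real.cos γ1 * Real.sin γ2)^2))
  else (1 + x3) * (1 + Real.cos (γ1 - γ2)) / 4

section LevelSets

variable {α β δ : Type*} [ConditionallyCompleteLinearOrder α] [TopologicalSpace α]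
  [OrderTopology α] [DenselyOrdered α] [LinearOrder δ] [TopologicalSpace δ]
  [OrderClosedTopology δ] [Preorder β]

theorem antitoneOn_of_sublevel_of_superlevel {f : α → β} {φ : α → δ} {s : Set α} {t : δ}
    (hs : s.OrdConnected) (hφ : ContinuousOn φ s)
    (h₁ : AntitoneOn f {x ∈ s | φ x ≤ t}) (h₂ : AntitoneOn f {x ∈ s | t ≤ φ x}) :
    AntitoneOn f s := by
  intro a ha b hb hab
  have crossing : t ∈ Set.uIcc (φ a) (φ b) → ∃ c ∈ s, a ≤ c ∧ c ≤ b ∧ φ c = t := by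
    intro ht
    obtain ⟨c, hc, hct⟩ := intermediate_value_uIcc (hφ.mono (hs.uIcc_subset ha hb)) ht
    have hc' : c ∈ Set.Icc a b := Set.uIcc_of_le hab ▸ hc
    exact ⟨c, hs.uIcc_subset ha hb hc, hc'.1, hc'.2, hct⟩
  rcases le_total (φ a) t with hat | hta <;> rcases le_total (φ b) t with hbt | htb
  · exact h₁ ⟨ha, hat⟩ ⟨hb, hbt⟩ hab
  · obtain ⟨c, hc, hac, hcb, hct⟩ := crossing (Set.mem_uIcc.2 (Or.inl ⟨hat, htb⟩))
    exact (h₂ ⟨hc, hct.ge⟩ ⟨hb, htb⟩ hcb).trans (h₁ ⟨ha, hat⟩ ⟨hc, hct.le⟩ hac)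
  · obtain ⟨c, hc, hac, hcb, hct⟩ := crossing (Set.mem_uIcc.2 (Or.inr ⟨hbt, hta⟩))
    exact (h₁ ⟨hc, hct.le⟩ ⟨hb, hbt⟩ hcb).trans (h₂ ⟨ha, hta⟩ ⟨hc, hct.ge⟩ hac)
  · exact h₂ ⟨ha, hta⟩ ⟨hb, htb⟩ hab

end LevelSets

theorem abs_sin_le_sin_of_abs_le {w θ : ℝ} (hw : |w| ≤ θ) (hθ : θ ≤ π / 2) :
    |sin w| ≤ sin θ := by
  rw [abs_le] at hw ⊢
  constructor
  · rw [← sin_neg]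
    exact sin_le_sin_of_le_of_le_pi_div_two (by linarith) (by linarith) (by linarith)
  · exact sin_le_sin_of_le_of_le_pi_div_two (by linarith) hθ hw.2

theorem abs_cos_sub_cos_le {a b k : ℝ} (hab : a ≤ b) (hba : b ≤ a + π) (ha : 0 ≤ cos a)
    (hb : 0 ≤ cos b) (hka : |sin a| ≤ k) (hkb : |sin b| ≤ k) :
    |cos a - cos b| ≤ k * sin (b - a) := by
  have hS : 0 ≤ sin (b - a) := sin_nonneg_of_nonneg_of_le_pi (by linarith) (by linarith)
  have hC : 0 ≤ 1 - cos (b - a) := sub_nonneg.2 (cos_le_one _)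
  have ea : cos a = cos b * cos (b - a) + sin b * sin (b - a) := by
    rw [← cos_sub, sub_sub_cancel]
  have eb : cos b = cos a * cos (b - a) - sin a * sin (b - a) := by
    rw [← cos_add, add_sub_cancel]
  rw [abs_le]
  constructor
  · nlinarith [mul_nonneg ha hC, mul_le_mul_of_nonneg_right (abs_le.1 hka).1 hS]
  · nlinarith [mul_nonneg hb hC, mul_le_mul_of_nonneg_right (abs_le.1 hkb).2 hS]

section GeometricMeasure

variable {γ1 w x : ℝ}

theorem sin_cos_bounds_of_abs_le_min (hγ : γ1 ∈ Set.Ioo 0 (π / 2))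
    (hw : |w| ≤ min γ1 (π / 2 - γ1)) :
    0 < sin γ1 ∧ 0 < cos γ1 ∧ 0 < cos w ∧ sin γ1 ≤ cos w ∧
      |sin w| ≤ sin γ1 ∧ |sin w| ≤ cos γ1 := by
  obtain ⟨h0, hπ⟩ := hγ
  have hw₁ : |w| ≤ γ1 := hw.trans (min_le_left _ _)
  have hw₂ : |w| ≤ π / 2 - γ1 := hw.trans (min_le_right _ _)
  have hpi := pi_pos
  refine ⟨sin_pos_of_pos_of_lt_pi h0 (by linarith), cos_pos_of_mem_Ioo ⟨by linarith, hπ⟩,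
    ?_, ?_, abs_sin_le_sin_of_abs_le hw₁ hπ.le, ?_⟩
  · rw [← cos_abs]
    exact cos_pos_of_mem_Ioo ⟨by linarith [abs_nonneg w], by linarith⟩
  · rw [← cos_abs, ← cos_pi_div_two_sub]
    exact cos_le_cos_of_nonneg_of_le_pi (abs_nonneg w) (by linarith) hw₂
  · rw [← sin_pi_div_two_sub]
    exact abs_sin_le_sin_of_abs_le hw₂ (by linarith)

noncomputable def gLower (γ1 γ2 x3 : ℝ) : ℝ := (1 - x3) * (1 + cos (γ1 + γ2)) / 4

noncomputable def uMid (γ1 γ2 x3 : ℝ) : ℝ := cos γ2 * sin γ1 - x3 * cos γ1 * sin γ2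

noncomputable def gMid (γ1 γ2 x3 : ℝ) : ℝ :=
  (1 - x3 ^ 2) * sin γ1 * cos γ2 * uMid γ1 γ2 x3 / (-2 * (x3 ^ 2 - uMid γ1 γ2 x3 ^ 2))

noncomputable def gUpper (γ1 γ2 x3 : ℝ) : ℝ := (1 + x3) * (1 + cos (γ1 - γ2)) / 4

theorem gGM_eq_ite (γ1 γ2 x3 : ℝ) :
    gGM γ1 γ2 x3 = if x3 ≤ x33 γ1 γ2 then gLower γ1 γ2 x3
      else if x3 < x34 γ1 γ2 then gMid γ1 γ2 x3 else gUpper γ1 γ2 x3 :=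
  rfl

noncomputable def x33Num (γ1 γ2 : ℝ) : ℝ := sin γ1 + (cos γ1 * cos γ2 + sin γ1 ^ 2) * sin γ2

noncomputable def x33Den (γ1 γ2 : ℝ) : ℝ :=
  cos γ2 + cos γ1 * cos γ2 ^ 2 - cos γ1 * sin γ2 ^ 2 * (cos γ1 * cos γ2 + sin γ1 ^ 2)

noncomputable def x33Gap (γ1 γ2 : ℝ) : ℝ := x33Den γ1 γ2 - x33Num γ1 γ2 * (1 - cos γ1 * sin γ2)

theorem x33_eq (γ1 : ℝ) {γ2 : ℝ} (h : cos γ2 ≠ 0) :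
    x33 γ1 γ2 = -(sin γ1 * cos γ2 * x33Num γ1 γ2) / x33Den γ1 γ2 := by
  have hden : 1 + cos γ1 * (cos γ2 - sin γ2 * (cos γ1 * sin γ2 + sin γ1 ^ 2 * tan γ2)) =
      x33Den γ1 γ2 / cos γ2 := by
    rw [tan_eq_sin_div_cos, x33Den]
    field_simp
    ring
  rw [x33, hden, x33Num, div_div_eq_mul_div]
  ring

theorem x34_eq_neg_x33_neg (γ1 γ2 : ℝ) : x34 γ1 γ2 = -x33 γ1 (-γ2) := by
  simp only [x33, x34, sin_neg, cos_neg, tan_neg]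
  ring

theorem x33Den_pos (hγ : γ1 ∈ Set.Ioo 0 (π / 2)) (hw : |w| ≤ min γ1 (π / 2 - γ1)) :
    0 < x33Den γ1 w := by
  obtain ⟨hs, hc, hq, hsq, -, hpc⟩ := sin_cos_bounds_of_abs_le_min hγ hw
  have hp : sin w ^ 2 ≤ cos γ1 ^ 2 := sq_le_sq' (abs_le.1 hpc).1 (abs_le.1 hpc).2
  have h1 := sin_sq_add_cos_sq γ1
  have h2 := sin_sq_add_cos_sq w
  have hcp : cos γ1 ^ 2 * sin w ^ 2 < 1 := by nlinarith
  have hsp : sin γ1 ^ 2 * sin w ^ 2 ≤ cos w ^ 2 := by nlinarith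
  have e : x33Den γ1 w = cos w * (1 - cos γ1 ^ 2 * sin w ^ 2) +
      cos γ1 * (cos w ^ 2 - sin γ1 ^ 2 * sin w ^ 2) := by
    rw [x33Den]; ring
  rw [e]
  have := mul_pos hq (sub_pos.2 hcp)
  have := mul_nonneg hc.le (sub_nonneg.2 hsp)
  linarith

theorem x33Num_nonneg (hγ : γ1 ∈ Set.Ioo 0 (π / 2)) (hw : |w| ≤ min γ1 (π / 2 - γ1)) :
    0 ≤ x33Num γ1 w := by
  obtain ⟨hs, hc, hq, -, hps, -⟩ := sin_cos_bounds_of_abs_le_min hγ hw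
  rw [x33Num]
  rcases le_total 0 (sin w) with hp | hp
  · positivity
  · have h1 : 0 ≤ 1 + sin γ1 * sin w := by nlinarith [abs_le.1 hps, sin_le_one γ1]
    have h2 : 0 ≤ 1 - cos (γ1 + w) := sub_nonneg.2 (cos_le_one _)
    rw [cos_add] at h2
    nlinarith [mul_nonneg (neg_nonneg.2 hp) h2, mul_nonneg (by linarith [abs_le.1 hps] :
      0 ≤ sin γ1 + sin w) h1]

theorem x33_nonpos (hγ : γ1 ∈ Set.Ioo 0 (π / 2)) (hw : |w| ≤ min γ1 (π / 2 - γ1)) :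
    x33 γ1 w ≤ 0 := by
  obtain ⟨hs, -, hq, -⟩ := sin_cos_bounds_of_abs_le_min hγ hw
  rw [x33_eq γ1 hq.ne']
  have := x33Num_nonneg hγ hw
  exact div_nonpos_of_nonpos_of_nonneg (neg_nonpos.2 (by positivity)) (x33Den_pos hγ hw).le

theorem continuousOn_x33 (hγ : γ1 ∈ Set.Ioo 0 (π / 2)) :
    ContinuousOn (x33 γ1) (Set.Icc (-min γ1 (π / 2 - γ1)) (min γ1 (π / 2 - γ1))) := by
  have hw : ∀ w ∈ Set.Icc (-min γ1 (π / 2 - γ1)) (min γ1 (π / 2 - γ1)),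
      |w| ≤ min γ1 (π / 2 - γ1) := fun w hw => abs_le.2 hw
  refine ContinuousOn.congr ?_ fun w hw' =>
    x33_eq γ1 (sin_cos_bounds_of_abs_le_min hγ (hw w hw')).2.2.1.ne'
  refine ContinuousOn.div (Continuous.continuousOn ?_) (Continuous.continuousOn ?_)
    fun w hw' => (x33Den_pos hγ (hw w hw')).ne'
  · unfold x33Num; fun_prop
  · unfold x33Den; fun_prop

theorem uMid_sub_pos (hγ : γ1 ∈ Set.Ioo 0 (π / 2)) (hw : |w| ≤ min γ1 (π / 2 - γ1))
    (hx : x < 0) : 0 < uMid γ1 w x - x := by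
  obtain ⟨hs, hc, hq, -, -, hpc⟩ := sin_cos_bounds_of_abs_le_min hγ hw
  have : 0 ≤ 1 + cos γ1 * sin w := by nlinarith [abs_le.1 hpc, cos_le_one γ1]
  rw [uMid]
  nlinarith [mul_pos hq hs, mul_nonneg (neg_nonneg.2 hx.le) this]

theorem x33Gap_pos (hγ : γ1 ∈ Set.Ioo 0 (π / 2)) (hw : |w| ≤ min γ1 (π / 2 - γ1))
    (hlt : sin w < cos γ1) : 0 < x33Gap γ1 w := by
  obtain ⟨hs, hc, -, hsq, -, hpc⟩ := sin_cos_bounds_of_abs_le_min hγ hw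
  have e : x33Gap γ1 w = (cos w - sin γ1) * (1 - cos γ1 * sin w) +
      cos γ1 * (cos w ^ 2 - sin γ1 ^ 2) + sin γ1 ^ 2 * (cos γ1 - sin w) := by
    rw [x33Gap, x33Den, x33Num]; ring
  rw [e]
  have := mul_nonneg (sub_nonneg.2 hsq) (by nlinarith [abs_le.1 hpc, cos_le_one γ1] :
    0 ≤ 1 - cos γ1 * sin w)
  have := mul_nonneg hc.le (by nlinarith : 0 ≤ cos w ^ 2 - sin γ1 ^ 2)
  have := mul_pos (pow_pos hs 2) (sub_pos.2 hlt)
  linarith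

theorem uMid_add_pos (hγ : γ1 ∈ Set.Ioo 0 (π / 2)) (hw : |w| ≤ min γ1 (π / 2 - γ1))
    (hx : -1 < x) (h : x33 γ1 w ≤ x) : 0 < uMid γ1 w x + x := by
  obtain ⟨hs, hc, hq, -, -, hpc⟩ := sin_cos_bounds_of_abs_le_min hγ hw
  have hD := x33Den_pos hγ hw
  have hP : 0 ≤ x * x33Den γ1 w + sin γ1 * cos w * x33Num γ1 w := by
    rw [x33_eq γ1 hq.ne', div_le_iff₀ hD] at h
    linarith
  have hcp : 0 ≤ 1 - cos γ1 * sin w := by nlinarith [abs_le.1 hpc, cos_le_one γ1]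
  rcases (abs_le.1 hpc).2.lt_or_eq with hlt | heq
  · have e : x33Den γ1 w * (uMid γ1 w x + x) = sin γ1 * cos w * x33Gap γ1 w +
        (1 - cos γ1 * sin w) * (x * x33Den γ1 w + sin γ1 * cos w * x33Num γ1 w) := by
      rw [x33Gap, uMid]; ring
    refine pos_of_mul_pos_right ?_ hD.le
    rw [e]
    have := mul_pos (mul_pos hs hq) (x33Gap_pos hγ hw hlt)
    have := mul_nonneg hcp hP
    linarith
  · -- the gap vanishes at `sin w = cos γ1`, but there `uMid + x = sin² γ1 * (1 + x)`
    have hqs : cos w = sin γ1 := by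
      refine (pow_left_inj₀ hq.le hs.le two_ne_zero).1 ?_
      nlinarith [sin_sq_add_cos_sq γ1, sin_sq_add_cos_sq w]
    rw [uMid, heq, hqs]
    nlinarith [mul_pos (pow_pos hs 2) (by linarith : 0 < 1 + x), sin_sq_add_cos_sq γ1]

theorem x33Gap_identity (γ1 w : ℝ) :
    (1 + cos (γ1 + w)) * x33Gap γ1 w * (x33Gap γ1 w + 2 * x33Num γ1 w) =
      2 * (x33Den γ1 w - sin γ1 * cos w * x33Num γ1 w) * (x33Gap γ1 w + x33Num γ1 w) := by
  have h1 := sin_sq_add_cos_sq γ1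
  have h2 := sin_sq_add_cos_sq w
  rw [cos_add]
  simp only [x33Gap, x33Num, x33Den]
  generalize sin γ1 = s at *
  generalize cos γ1 = c at *
  generalize sin w = p at *
  generalize cos w = q at *
  linear_combination (s ^ 3 * p ^ 3 + s ^ 2 * c * p ^ 2 * q + s ^ 2 * p ^ 2
      + 2 * s * c * p ^ 3 * q + 2 * s * c * p * q ^ 3 + s * p ^ 3 * q ^ 2 + s * p * q ^ 4
      + c * p ^ 2 * q ^ 3 + c * q ^ 5 + p ^ 2 * q ^ 2 + q ^ 4) * h1
    + (-s ^ 3 * p * q ^ 2 + s ^ 3 * p - s ^ 2 * c * q ^ 3 + s ^ 2 * c * q - s ^ 2 * q ^ 2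
      + s ^ 2 + 2 * s * c * p * q + s * p * q ^ 2 + c * q ^ 3 + q ^ 2) * h2

theorem gMid_eq_gLower_of_x33_eq (hq : cos w ≠ 0) (hD : x33Den γ1 w ≠ 0)
    (hu : x ^ 2 - uMid γ1 w x ^ 2 ≠ 0) (h : x33 γ1 w = x) : gMid γ1 w x = gLower γ1 w x := by
  rw [x33_eq γ1 hq, div_eq_iff hD] at h
  set D := x33Den γ1 w
  set N := x33Num γ1 w
  set u := uMid γ1 w x
  have hP : x * D + sin γ1 * cos w * N = 0 := by linarith
  -- On the boundary, `D * (u ± x)`, `D * u` and `D * (1 + x)` are multiples of `sin γ1 * cos w`,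
  -- which reduces the claim to `x33Gap_identity`.
  have hplus : D * (u + x) = sin γ1 * cos w * x33Gap γ1 w := by
    rw [x33Gap]; simp only [u, uMid]; linear_combination (1 - cos γ1 * sin w) * hP
  have hminus : D * (u - x) = sin γ1 * cos w * (x33Gap γ1 w + 2 * N) := by
    rw [x33Gap]; simp only [u, uMid]; linear_combination (-(1 + cos γ1 * sin w)) * hP
  have hmid : D * u = sin γ1 * cos w * (x33Gap γ1 w + N) := by
    rw [x33Gap]; simp only [u, uMid]; linear_combination (-(cos γ1 * sin w)) * hP
  have hone : D * (1 + x) = D - sin γ1 * cos w * N := by linear_combination hP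
  have hE : (1 + cos (γ1 + w)) * (u ^ 2 - x ^ 2) = 2 * (1 + x) * sin γ1 * cos w * u := by
    refine mul_left_cancel₀ (pow_ne_zero 2 hD) ?_
    linear_combination (1 + cos (γ1 + w)) * D * (u - x) * hplus
      + (1 + cos (γ1 + w)) * sin γ1 * cos w * x33Gap γ1 w * hminus
      - 2 * sin γ1 * cos w * (D * u) * hone
      - 2 * sin γ1 * cos w * (D - sin γ1 * cos w * N) * hmid
      + (sin γ1 * cos w) ^ 2 * x33Gap_identity γ1 w
  rw [gMid, gLower, div_eq_div_iff (mul_ne_zero (by norm_num) hu) four_ne_zero]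
  linear_combination (-2 * (1 - x)) * hE

theorem gMid_eq_mul_add (h₁ : uMid γ1 w x - x ≠ 0) (h₂ : uMid γ1 w x + x ≠ 0) :
    gMid γ1 w x = (1 - x ^ 2) * sin γ1 / 4 *
      (cos w / (uMid γ1 w x - x) + cos w / (uMid γ1 w x + x)) := by
  rw [gMid, show -2 * (x ^ 2 - uMid γ1 w x ^ 2) = 2 * ((uMid γ1 w x - x) * (uMid γ1 w x + x))
    by ring]
  field_simp
  ring

theorem cos_div_uMid_add_le {a b y : ℝ} (hy : |y| ≤ -x)
    (hab : |cos a - cos b| ≤ cos γ1 * sin (b - a)) (ha : 0 < uMid γ1 a x + y)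
    (hb : 0 < uMid γ1 b x + y) :
    cos b / (uMid γ1 b x + y) ≤ cos a / (uMid γ1 a x + y) := by
  rw [div_le_div_iff₀ hb ha, ← sub_nonneg]
  have e : cos a * (uMid γ1 b x + y) - cos b * (uMid γ1 a x + y) =
      y * (cos a - cos b) - x * (cos γ1 * sin (b - a)) := by
    rw [uMid, uMid, sin_sub]; ring
  have h₁ : |y| * |cos a - cos b| ≤ -x * (cos γ1 * sin (b - a)) :=
    mul_le_mul hy hab (abs_nonneg _) ((abs_nonneg y).trans hy)
  have h₂ : -(y * (cos a - cos b)) ≤ |y| * |cos a - cos b| := by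
    rw [← abs_mul]; exact neg_le_abs _
  rw [e]
  linarith

theorem gMid_le_gMid {a b : ℝ} (hx : x ∈ Set.Icc (-1) 0) (hs : 0 ≤ sin γ1)
    (hab : |cos a - cos b| ≤ cos γ1 * sin (b - a))
    (ha₁ : 0 < uMid γ1 a x - x) (ha₂ : 0 < uMid γ1 a x + x)
    (hb₁ : 0 < uMid γ1 b x - x) (hb₂ : 0 < uMid γ1 b x + x) :
    gMid γ1 b x ≤ gMid γ1 a x := by
  rw [gMid_eq_mul_add hb₁.ne' hb₂.ne', gMid_eq_mul_add ha₁.ne' ha₂.ne']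
  have hk : 0 ≤ (1 - x ^ 2) * sin γ1 / 4 := by
    have : x ^ 2 ≤ 1 := by nlinarith [hx.1, hx.2]
    exact div_nonneg (mul_nonneg (by linarith) hs) (by norm_num)
  have hminus := cos_div_uMid_add_le (y := -x) (by rw [abs_neg, abs_of_nonpos hx.2]) hab
    (by rwa [← sub_eq_add_neg]) (by rwa [← sub_eq_add_neg])
  have hplus := cos_div_uMid_add_le (y := x) (abs_of_nonpos hx.2).le hab ha₂ hb₂
  simp only [← sub_eq_add_neg] at hminus
  exact mul_le_mul_of_nonneg_left (add_le_add hminus hplus) hk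

theorem antitoneOn_gLower (γ1 : ℝ) (hx : x ≤ 1) :
    AntitoneOn (fun w => gLower γ1 w x) (Set.Icc (-γ1) (π - γ1)) := by
  intro a ha b hb hab
  have := antitoneOn_cos (⟨by linarith [ha.1], by linarith [ha.2]⟩ : γ1 + a ∈ Set.Icc 0 π)
    ⟨by linarith [hb.1], by linarith [hb.2]⟩ (by linarith : γ1 + a ≤ γ1 + b)
  simp only [gLower]
  exact div_le_div_of_nonneg_right (mul_le_mul_of_nonneg_left (by linarith) (by linarith))
    (by norm_num)

theorem gGM_eq_gMid (hγ : γ1 ∈ Set.Ioo 0 (π / 2)) (hw : |w| ≤ min γ1 (π / 2 - γ1))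
    (hx : x ∈ Set.Ioo (-1) 0) (h : x33 γ1 w ≤ x) : gGM γ1 w x = gMid γ1 w x := by
  have hx34 : x < x34 γ1 w := by
    rw [x34_eq_neg_x33_neg]
    linarith [x33_nonpos hγ (by rwa [abs_neg] : |-w| ≤ _), hx.2]
  rw [gGM_eq_ite]
  rcases h.lt_or_eq with hlt | heq
  · rw [if_neg hlt.not_ge, if_pos hx34]
  · have hu : x ^ 2 - uMid γ1 w x ^ 2 ≠ 0 := by
      nlinarith [mul_pos (uMid_sub_pos hγ hw hx.2) (uMid_add_pos hγ hw hx.1 h)]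
    rw [if_pos heq.ge, gMid_eq_gLower_of_x33_eq
      (sin_cos_bounds_of_abs_le_min hγ hw).2.2.1.ne' (x33Den_pos hγ hw).ne' hu heq]

theorem antitoneOn_gGM (hγ : γ1 ∈ Set.Ioo 0 (π / 2)) (hx : x ∈ Set.Ioo (-1) 0) :
    AntitoneOn (fun w => gGM γ1 w x)
      (Set.Icc (-min γ1 (π / 2 - γ1)) (min γ1 (π / 2 - γ1))) := by
  have hwin : ∀ w ∈ Set.Icc (-min γ1 (π / 2 - γ1)) (min γ1 (π / 2 - γ1)),
      |w| ≤ min γ1 (π / 2 - γ1) := fun w hw => abs_le.2 hw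
  refine antitoneOn_of_sublevel_of_superlevel Set.ordConnected_Icc (continuousOn_x33 hγ)
    (t := x) ?_ ?_
  · refine AntitoneOn.congr (f₁ := fun w => gMid γ1 w x) ?_
      fun w hw => (gGM_eq_gMid hγ (hwin w hw.1) hx hw.2).symm
    rintro a ⟨ha, hax⟩ b ⟨hb, hbx⟩ hab
    obtain ⟨hs, -, hqa, -, -, hpa⟩ := sin_cos_bounds_of_abs_le_min hγ (hwin a ha)
    obtain ⟨-, -, hqb, -, -, hpb⟩ := sin_cos_bounds_of_abs_le_min hγ (hwin b hb)
    have hba : b ≤ a + π := by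
      linarith [ha.1, hb.2, min_le_left γ1 (π / 2 - γ1), min_le_right γ1 (π / 2 - γ1), pi_pos]
    exact gMid_le_gMid ⟨hx.1.le, hx.2.le⟩ hs.le
      (abs_cos_sub_cos_le hab hba hqa.le hqb.le hpa hpb)
      (uMid_sub_pos hγ (hwin a ha) hx.2) (uMid_add_pos hγ (hwin a ha) hx.1 hax)
      (uMid_sub_pos hγ (hwin b hb) hx.2) (uMid_add_pos hγ (hwin b hb) hx.1 hbx)
  · refine ((antitoneOn_gLower γ1 (hx.2.le.trans zero_le_one)).mono ?_).congr
      fun w hw => (if_pos hw.2).symm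
    rintro w ⟨hw, -⟩
    have := hwin w hw
    constructor <;> linarith [abs_le.1 this, min_le_left γ1 (π / 2 - γ1),
      min_le_right γ1 (π / 2 - γ1), pi_pos]

theorem gGM_neg (h : x33 γ1 w < x) : gGM γ1 (-w) (-x) = gGM γ1 w x := by
  have hlow : gLower γ1 (-w) (-x) = gUpper γ1 w x := by
    simp only [gLower, gUpper, sub_neg_eq_add, ← sub_eq_add_neg]
  have hmid : gMid γ1 (-w) (-x) = gMid γ1 w x := by
    simp only [gMid, uMid, sin_neg, cos_neg]; ring
  simp only [gGM_eq_ite, x34_eq_neg_x33_neg, neg_neg, hlow, hmid]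
  split_ifs <;> first | rfl | linarith

end GeometricMeasure

theorem stmt19_general (γ1 : ℝ) (x3 : ℝ) :
    (x3 ∈ Set.Ioo (-1:ℝ) 0 →
      AntitoneOn (fun γ2 => gGM γ1 γ2 x3) (Set.Icc 0 (min γ1 (π/2 - γ1)))) ∧
    (x3 ∈ Set.Ioo (0:ℝ) 1 →
      MonotoneOn (fun γ2 => gGM γ1 γ2 x3) (Set.Icc 0 (min γ1 (π/2 - γ1)))) := by
  by_cases hγ : γ1 ∈ Set.Ioo 0 (π / 2)
  swap
  · have hm : min γ1 (π / 2 - γ1) ≤ 0 := by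
      rcases not_and_or.1 hγ with h | h
      · exact (min_le_left _ _).trans (not_lt.1 h)
      · exact (min_le_right _ _).trans (by linarith [not_lt.1 h])
    have hI := Set.subsingleton_Icc_of_ge hm
    exact ⟨fun _ => hI.antitoneOn _, fun _ => hI.monotoneOn _⟩
  have hm : 0 ≤ min γ1 (π / 2 - γ1) := le_min hγ.1.le (by linarith [hγ.2])
  refine ⟨fun hx => (antitoneOn_gGM hγ hx).mono (Set.Icc_subset_Icc_left (by linarith)), ?_⟩
  rintro hx a ⟨ha₀, ha⟩ b ⟨hb₀, hb⟩ hab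
  have hwa : |a| ≤ min γ1 (π / 2 - γ1) := abs_le.2 ⟨by linarith, ha⟩
  have hwb : |b| ≤ min γ1 (π / 2 - γ1) := abs_le.2 ⟨by linarith, hb⟩
  show gGM γ1 a x3 ≤ gGM γ1 b x3
  rw [← gGM_neg ((x33_nonpos hγ hwa).trans_lt hx.1),
    ← gGM_neg ((x33_nonpos hγ hwb).trans_lt hx.1)]
  exact antitoneOn_gGM hγ ⟨by linarith [hx.2], by linarith [hx.1]⟩ ⟨by linarith, by linarith⟩
    ⟨by linarith, by linarith⟩ (neg_le_neg hab)

theorem stmt19 (γ1 : ℝ) (hγ1 : γ1 ∈ Set.Icc (0:ℝ) (π/2)) (x3 : ℝ) :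
    (x3 ∈ Set.Ioo (-1:ℝ) 0 →
      AntitoneOn (fun γ2 => gGM γ1 γ2 x3) (Set.Icc 0 (min γ1 (π/2 - γ1)))) ∧
    (x3 ∈ Set.Ioo (0:ℝ) 1 →
      MonotoneOn (fun γ2 => gGM γ1 γ2 x3) (Set.Icc 0 (min γ1 (π/2 - γ1)))) :=
  stmt19_general γ1 x3
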